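/- arXiv:2402.13175 — 13 statements merged into one kernel-verified Lean document; each statement's English description precedes it below -/
import Mathlib

section
/- For all quaternions a and q with ‖a‖ < 1 and ‖q‖ < 1, the quaternion q²‖a‖² − 2·Re(a)·q + 1 is nonzero. -/
/-! Every quaternion satisfies `q ^ 2 = 2 Re(q) q - ‖q‖²`, so the denominator collapses to the
affine expression `2 (‖a‖² Re(q) - Re(a)) q + (1 - ‖a‖² ‖q‖²)`. Its imaginary part vanishes only
if the coefficient of `q` does, which leaves `1 - ‖a‖² ‖q‖² > 0`, or if `q = t` is real, which
leaves the real quadratic `‖a‖² t² - 2 Re(a) t + 1 ≥ (Re(a) t - 1)² > 0`. -/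

theorem zero_lt_mul_sq_sub_two_mul_add_one {x y t : ℝ} (hxy : x ^ 2 ≤ y) (hyt : y * t ^ 2 < 1) :
    0 < y * t ^ 2 - 2 * x * t + 1 := by
  have hxt : x * t < 1 := by nlinarith [sq_nonneg t, sq_nonneg (x * t - 1)]
  nlinarith [mul_le_mul_of_nonneg_right hxy (sq_nonneg t), sq_pos_of_pos (sub_pos.2 hxt)]

namespace Quaternion

theorem sq_eq_two_re_smul_sub_normSq {R : Type*} [CommRing R] (a : ℍ[R]) :
    a ^ 2 = (2 * a.re) • a - ((normSq a : R) : ℍ[R]) := by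
  have h := congrArg (a * ·) (self_add_star' a)
  simp only [mul_add, self_mul_star] at h
  rw [sq, ← mul_coe_eq_smul, ← h, add_sub_cancel_right]

theorem re_sq_le_norm_sq (a : ℍ) : a.re ^ 2 ≤ ‖a‖ ^ 2 := by
  rw [sq ‖a‖, ← normSq_eq_norm_mul_self, normSq_def']
  nlinarith [sq_nonneg a.imI, sq_nonneg a.imJ, sq_nonneg a.imK]

theorem norm_sq_eq_re_sq_of_im_eq_zero {a : ℍ} (ha : a.im = 0) : ‖a‖ ^ 2 = a.re ^ 2 := by
  rw [← re_add_im a, ha, add_zero, norm_coe, Real.norm_eq_abs, sq_abs, re_coe]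

theorem smul_sq_sub_smul_add_one (c r : ℝ) (q : ℍ) :
    c • q ^ 2 - r • q + 1 = (2 * c * q.re - r) • q + ((1 - c * ‖q‖ ^ 2 : ℝ) : ℍ) := by
  rw [sq_eq_two_re_smul_sub_normSq, normSq_eq_norm_mul_self, ← sq, smul_sub, smul_smul,
    smul_coe, coe_sub, coe_one]
  module

end Quaternion

/-- For all quaternions `a`, `q` with `‖a‖ < 1` and `‖q‖ < 1`, the quaternion
`q²‖a‖² − 2·Re(a)·q + 1` is nonzero. -/
theorem mobius_denominator_ne_zero (a q : Quaternion ℝ) (ha : ‖a‖ < 1) (hq : ‖q‖ < 1) :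
    ‖a‖ ^ 2 • q ^ 2 - (2 * a.re) • q + 1 ≠ 0 := by
  have hnorm : ‖a‖ ^ 2 * ‖q‖ ^ 2 < 1 := by
    rw [← mul_pow]
    exact pow_lt_one₀ (by positivity) (mul_lt_one_of_nonneg_of_lt_one_left (norm_nonneg a) ha hq.le)
      two_ne_zero
  rw [Quaternion.smul_sq_sub_smul_add_one]
  intro h
  set s := 2 * ‖a‖ ^ 2 * q.re - 2 * a.re
  have him : s • q.im = 0 := by
    simpa only [Quaternion.im_add, Quaternion.im_smul, Quaternion.im_coe, add_zero,
      Quaternion.im_zero] using congrArg Quaternion.im h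
  have hre : s * q.re + (1 - ‖a‖ ^ 2 * ‖q‖ ^ 2) = 0 := by
    simpa only [Quaternion.re_add, Quaternion.re_smul, Quaternion.re_coe, smul_eq_mul,
      Quaternion.re_zero] using congrArg (·.re) h
  rcases smul_eq_zero.1 him with hs | hreal
  · rw [hs, zero_mul, zero_add] at hre
    linarith
  · rw [Quaternion.norm_sq_eq_re_sq_of_im_eq_zero hreal] at hre hnorm
    have hquad := zero_lt_mul_sq_sub_two_mul_add_one (Quaternion.re_sq_le_norm_sq a) hnorm
    linarith
end

section
/- Let a₁, a₂ ∈ ℍ with ‖a₁‖ < 1 and ‖a₂‖ < 1, and let u₁, u₂ ∈ ℍ with ‖u₁‖ = ‖u₂‖ = 1. Suppose there exists q ∈ ℍ with ‖q‖ < 1 such that 𝓕_{a₁}(q)·u₁ = 0 and 𝓕_{a₂}(q)·u₂ = 0. Then a₁ = a₂ = q, and there exists u ∈ ℍ with ‖u‖ = 1 such that 𝓕_{a₁}(p)·u₁ = (𝓕_{a₂}(p)·u₂)·u for every p ∈ ℍ with ‖p‖ < 1. -/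
/-!
Both the numerator and the denominator of `𝓕_a(q)` can be written in the form `x - y * x * z`
with `‖y‖ * ‖z‖ < 1`:
`q²a - q(a² + 1) + a = -((q - a) - q (q - a) a)` and
`‖a‖²q² - 2 Re(a) q + 1 = (1 - qa) - q (1 - qa) ā`.
Such an expression vanishes only when `x = 0`, because `‖y x z‖ < ‖x‖` otherwise. Hence the
denominator never vanishes on `𝔹`, and `𝓕_a(q) = 0` forces `a = q`. With `a₁ = a₂`, the two
transformations differ by the unit `u₂⁻¹ u₁`.
-/

/-- The regular Möbius transformation `𝓕_a` in its explicit rational form. -/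
noncomputable def regularMobius (a q : Quaternion ℝ) : Quaternion ℝ :=
  (‖a‖ ^ 2 • q ^ 2 - (2 * a.re) • q + 1)⁻¹ * (q ^ 2 * a - q * (a ^ 2 + 1) + a)

open Quaternion

theorem eq_zero_of_eq_mul_mul_of_norm_mul_lt_one {R : Type*} [NormedRing R] {x y z : R}
    (h : x = y * x * z) (hyz : ‖y‖ * ‖z‖ < 1) : x = 0 := by
  have hle : ‖x‖ ≤ ‖y‖ * ‖z‖ * ‖x‖ :=
    calc ‖x‖ = ‖y * x * z‖ := by rw [← h]
      _ ≤ ‖y‖ * ‖x‖ * ‖z‖ := norm_mul₃_le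
      _ = ‖y‖ * ‖z‖ * ‖x‖ := by ring
  exact norm_le_zero_iff.mp (by nlinarith [norm_nonneg x])

lemma regularMobius_denom_eq (a q : ℍ) :
    ‖a‖ ^ 2 • q ^ 2 - (2 * a.re) • q + 1 = (1 - q * a) - q * (1 - q * a) * star a := by
  have hmul : a * star a = ((‖a‖ ^ 2 : ℝ) : ℍ) := by
    rw [self_mul_star, normSq_eq_norm_mul_self, sq]
  have hadd : a + star a = ((2 * a.re : ℝ) : ℍ) := by
    rw [self_add_star, coe_mul]; rfl
  calc ‖a‖ ^ 2 • q ^ 2 - (2 * a.re) • q + 1 = 1 - q * (a + star a) + q ^ 2 * (a * star a) := by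
        rw [hmul, hadd, mul_coe_eq_smul, mul_coe_eq_smul]; abel
    _ = _ := by noncomm_ring

lemma regularMobius_denom_ne_zero {a q : ℍ} (ha : ‖a‖ < 1) (hq : ‖q‖ < 1) :
    ‖a‖ ^ 2 • q ^ 2 - (2 * a.re) • q + 1 ≠ 0 := by
  have hqa : ‖q‖ * ‖a‖ < 1 := mul_lt_one_of_nonneg_of_lt_one_left (norm_nonneg q) hq ha.le
  have hf : 1 - q * a ≠ 0 := fun h => by
    rw [← norm_mul, ← sub_eq_zero.mp h, norm_one] at hqa
    exact lt_irrefl 1 hqa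
  rw [regularMobius_denom_eq, sub_ne_zero]
  refine fun h => hf (eq_zero_of_eq_mul_mul_of_norm_mul_lt_one h ?_)
  rwa [norm_star]

lemma eq_of_regularMobius_numerator_eq_zero {a q : ℍ} (ha : ‖a‖ < 1) (hq : ‖q‖ < 1)
    (h : q ^ 2 * a - q * (a ^ 2 + 1) + a = 0) : a = q := by
  have hfix : q - a = q * (q - a) * a := by
    linear_combination (norm := noncomm_ring) -h
  have hqa : ‖q‖ * ‖a‖ < 1 := mul_lt_one_of_nonneg_of_lt_one_left (norm_nonneg q) hq ha.le
  exact (sub_eq_zero.mp (eq_zero_of_eq_mul_mul_of_norm_mul_lt_one hfix hqa)).symm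

lemma eq_of_regularMobius_eq_zero {a q : ℍ} (ha : ‖a‖ < 1) (hq : ‖q‖ < 1)
    (h : regularMobius a q = 0) : a = q := by
  rw [regularMobius, mul_eq_zero, inv_eq_zero] at h
  exact eq_of_regularMobius_numerator_eq_zero ha hq
    (h.resolve_left (regularMobius_denom_ne_zero ha hq))

/-- two regular Möbius transformations of `𝔹` vanishing at a common point `q ∈ 𝔹`
have `a₁ = a₂ = q` and differ by right multiplication by a unit quaternion. -/
theorem regularMobius_common_zero (a₁ a₂ u₁ u₂ : Quaternion ℝ)
    (ha₁ : ‖a₁‖ < 1) (ha₂ : ‖a₂‖ < 1) (hu₁ : ‖u₁‖ = 1) (hu₂ : ‖u₂‖ = 1)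
    (q : Quaternion ℝ) (hq : ‖q‖ < 1)
    (h₁ : regularMobius a₁ q * u₁ = 0) (h₂ : regularMobius a₂ q * u₂ = 0) :
    a₁ = q ∧ a₂ = q ∧ ∃ u : Quaternion ℝ, ‖u‖ = 1 ∧
      ∀ p : Quaternion ℝ, ‖p‖ < 1 →
        regularMobius a₁ p * u₁ = (regularMobius a₂ p * u₂) * u := by
  have hu₁₀ : u₁ ≠ 0 := norm_ne_zero_iff.mp (by rw [hu₁]; exact one_ne_zero)
  have hu₂₀ : u₂ ≠ 0 := norm_ne_zero_iff.mp (by rw [hu₂]; exact one_ne_zero)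
  have e₁ : a₁ = q := eq_of_regularMobius_eq_zero ha₁ hq ((mul_eq_zero.mp h₁).resolve_right hu₁₀)
  have e₂ : a₂ = q := eq_of_regularMobius_eq_zero ha₂ hq ((mul_eq_zero.mp h₂).resolve_right hu₂₀)
  refine ⟨e₁, e₂, u₂⁻¹ * u₁, by rw [norm_mul, norm_inv, hu₁, hu₂, inv_one, one_mul], ?_⟩
  intro p _
  rw [e₁, e₂, mul_assoc, ← mul_assoc u₂, mul_inv_cancel₀ hu₂₀, one_mul]
end

section
/- There is no map T : ℍ × ℍ → ℍ with all of the following properties: T is additive in each variable; T(c·α, β) = c·T(α, β) for all c, α, β ∈ ℍ (left ℍ-linearity in the first variable); T(α, β) = conj(T(β, α)) for all α, β ∈ ℍ (Hermitian symmetry); for every α ≠ 0, T(α, α) is a real number r > 0 (viewed inside ℍ, i.e. T(α,α) has zero imaginary part and positive real part); and T(conj(u)·α·v, conj(u)·β·v) = T(α, β) for all α, β ∈ ℍ and all unit quaternions u, v (invariance under the isotropy action of Sp(1) × Sp(1)). -/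
/-!
Left linearity and Hermitian symmetry force `T α β = α * t * star β` with `t = T 1 1`, which
positivity makes a nonzero real scalar. Invariance under `α ↦ star u * α` (taking `v = 1`) then
says that conjugation by any unit quaternion fixes every quaternion, which fails for `u = i`,
`x = j`.
-/

open Quaternion

theorem eq_mul_mul_star_of_leftLinear_of_hermitian {R : Type*} [Ring R] [StarRing R]
    {T : R → R → R} (hlin : ∀ c a b, T (c * a) b = c * T a b)
    (hherm : ∀ a b, T a b = star (T b a)) (a b : R) :
    T a b = a * T 1 1 * star b := by
  have hfirst : ∀ a b, T a b = a * T 1 b := fun a b => by simpa using hlin a 1 b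
  rw [hfirst, hherm 1, hfirst, star_mul, ← hherm, mul_assoc]

theorem Quaternion.eq_coe_re_of_im_eq_zero {q : ℍ[ℝ]} (h : q.im = 0) : q = (q.re : ℍ[ℝ]) := by
  rw [← q.re_add_im, h, add_zero, re_coe]

theorem Quaternion.exists_norm_eq_one_star_mul_mul_ne :
    ∃ u x : ℍ[ℝ], ‖u‖ = 1 ∧ star u * x * u ≠ x := by
  let i : ℍ[ℝ] := ⟨0, 1, 0, 0⟩
  let j : ℍ[ℝ] := ⟨0, 0, 1, 0⟩
  refine ⟨i, j, ?_, fun h => ?_⟩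
  · rw [← pow_eq_one_iff_of_nonneg (norm_nonneg _) two_ne_zero, sq, ← normSq_eq_norm_mul_self,
      normSq_def']
    norm_num
  · have himJ := congrArg QuaternionAlgebra.imJ h
    norm_num at himJ

/-- there is no `ℍ`-valued left Hermitian positive definite form on `ℍ` that is
invariant under the isotropy action `α ↦ conj(u)·α·v` of `Sp(1) × Sp(1)`. -/
theorem no_invariant_left_hermitian_form :
    ¬ ∃ T : Quaternion ℝ → Quaternion ℝ → Quaternion ℝ,
      (∀ α α' β : Quaternion ℝ, T (α + α') β = T α β + T α' β) ∧
      (∀ α β β' : Quaternion ℝ, T α (β + β') = T α β + T α β') ∧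
      (∀ c α β : Quaternion ℝ, T (c * α) β = c * T α β) ∧
      (∀ α β : Quaternion ℝ, T α β = star (T β α)) ∧
      (∀ α : Quaternion ℝ, α ≠ 0 → (T α α).im = 0 ∧ 0 < (T α α).re) ∧
      (∀ (α β u v : Quaternion ℝ), ‖u‖ = 1 → ‖v‖ = 1 →
        T (star u * α * v) (star u * β * v) = T α β) := by
  rintro ⟨T, -, -, hlin, hherm, hpos, hinv⟩
  obtain ⟨him, hre⟩ := hpos 1 one_ne_zero
  set r := (T 1 1).re
  have hT (a b : ℍ[ℝ]) : T a b = a * r * star b := by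
    rw [eq_mul_mul_star_of_leftLinear_of_hermitian hlin hherm, ← eq_coe_re_of_im_eq_zero him]
  obtain ⟨u, x, hu, hux⟩ := exists_norm_eq_one_star_mul_mul_ne
  have hconj := hinv x 1 u 1 hu norm_one
  simp only [mul_one, hT, star_star, star_one] at hconj
  have hscaled : star u * x * u * r = x * r := by
    rw [← hconj, mul_assoc _ (r : ℍ[ℝ]), (coe_commute r u).eq, mul_assoc]
  exact hux (mul_right_cancel₀ (coe_injective.ne hre.ne') hscaled)
end

section
/- Let q ∈ ℍ with ‖q‖ < 1 and let α, β ∈ ℍ. Let D_α denote the derivative at t = 0 of the real-variable map t ↦ 𝓕_q(q + t·α), where 𝓕_q(p) = (p²‖q‖² − 2·Re(q)·p + 1)⁻¹ · (p²q − p(q² + 1) + q), and similarly D_β. Then D_α · conj(D_β) = (1 − ‖q‖²)⁻² · (1 − q²)⁻¹ · (α − qαq) · conj(β − qβq) · (1 − conj(q)²)⁻¹. -/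
theorem Quaternion.two_re_smul_self (q : Quaternion ℝ) :
    (2 * q.re) • q = q ^ 2 + ‖q‖ ^ 2 • (1 : Quaternion ℝ) := by
  calc (2 * q.re) • q = (q + star q) * q := by
        rw [Quaternion.self_add_star', Quaternion.coe_mul_eq_smul]
    _ = q ^ 2 + ‖q‖ ^ 2 • (1 : Quaternion ℝ) := by
        rw [add_mul, ← sq, Quaternion.star_mul_self, Quaternion.normSq_eq_norm_mul_self, ← sq,
          ← Quaternion.coe_mul_eq_smul, mul_one]

theorem Quaternion.norm_sq_smul_sq_sub_two_re_smul_add_one (a : Quaternion ℝ) :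
    ‖a‖ ^ 2 • a ^ 2 - (2 * a.re) • a + 1 = (1 - ‖a‖ ^ 2) • (1 - a ^ 2 : Quaternion ℝ) := by
  rw [Quaternion.two_re_smul_self]
  module

theorem one_sub_sq_ne_zero_of_norm_lt_one {R : Type*} [NormedRing R] [NormOneClass R] {x : R}
    (hx : ‖x‖ < 1) : 1 - x ^ 2 ≠ 0 := by
  refine sub_ne_zero.2 fun h => ?_
  have := norm_pow_le x 2
  rw [← h, norm_one] at this
  nlinarith [norm_nonneg x]

theorem HasDerivAt.inv_mul_of_eq_zero {𝕜 R : Type*} [NontriviallyNormedField 𝕜]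
    [NormedDivisionRing R] [NormedAlgebra 𝕜 R] {f g : 𝕜 → R} {g' : R} {x : 𝕜}
    (hf : DifferentiableAt 𝕜 f x) (hfx : f x ≠ 0) (hg : HasDerivAt g g' x) (hgx : g x = 0) :
    HasDerivAt (fun t => (f t)⁻¹ * g t) ((f x)⁻¹ * g') x := by
  have hinv : DifferentiableAt 𝕜 (fun t => (f t)⁻¹) x := (differentiableAt_inv hfx).comp x hf
  have := hinv.hasDerivAt.mul hg
  rwa [hgx, mul_zero, zero_add] at this

theorem hasDerivAt_mobiusNumerator_line {A : Type*} [NormedRing A] [NormedAlgebra ℝ A]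
    (a v : A) :
    HasDerivAt (fun t : ℝ => (a + t • v) ^ 2 * a - (a + t • v) * (a ^ 2 + 1) + a)
      (a * v * a - v) 0 := by
  have hline : HasDerivAt (fun t : ℝ => a + t • v) v 0 := by
    simpa using ((hasDerivAt_id (0 : ℝ)).smul_const v).const_add a
  have h := (((hline.mul hline).mul_const a).sub (hline.mul_const (a ^ 2 + 1))).add_const a
  refine (h.congr_deriv ?_).congr_of_eventuallyEq (.of_forall fun t => ?_)
  · simp only [zero_smul, add_zero]
    noncomm_ring
  · simp [sq]

theorem hasDerivAt_regularMobius_line {q : Quaternion ℝ} (hq : ‖q‖ < 1) (v : Quaternion ℝ) :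
    HasDerivAt (fun t : ℝ => regularMobius q (q + t • v))
      (-(1 - ‖q‖ ^ 2)⁻¹ • ((1 - q ^ 2)⁻¹ * (v - q * v * q))) 0 := by
  have hc : 1 - ‖q‖ ^ 2 ≠ 0 := by nlinarith [norm_nonneg q]
  have hden := smul_ne_zero hc (one_sub_sq_ne_zero_of_norm_lt_one hq)
  rw [← Quaternion.norm_sq_smul_sq_sub_two_re_smul_add_one] at hden
  refine HasDerivAt.congr_deriv (HasDerivAt.inv_mul_of_eq_zero
    (f := fun t : ℝ => ‖q‖ ^ 2 • (q + t • v) ^ 2 - (2 * q.re) • (q + t • v) + 1)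
    (by fun_prop) (by simpa using hden)
    (hasDerivAt_mobiusNumerator_line q v) (by simp only [zero_smul, add_zero]; noncomm_ring)) ?_
  rw [zero_smul, add_zero, Quaternion.norm_sq_smul_sq_sub_two_re_smul_add_one, smul_inv₀,
    smul_mul_assoc, neg_smul, ← smul_neg, ← mul_neg, neg_sub]

/-- if `Dα`, `Dβ` are the directional derivatives of `𝓕_q` at `q` in the
directions `α`, `β`, then `Dα · conj(Dβ)` equals the explicit expression of the slice
Hermitian metric `H_q(α, β)`. -/
theorem slice_hermitian_from_derivative (q : Quaternion ℝ) (hq : ‖q‖ < 1)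
    (α β Dα Dβ : Quaternion ℝ)
    (hα : HasDerivAt (fun t : ℝ => regularMobius q (q + t • α)) Dα 0)
    (hβ : HasDerivAt (fun t : ℝ => regularMobius q (q + t • β)) Dβ 0) :
    Dα * star Dβ =
      ((1 - ‖q‖ ^ 2) ^ 2)⁻¹ •
        ((1 - q ^ 2)⁻¹ * (α - q * α * q) * star (β - q * β * q) * (1 - star q ^ 2)⁻¹) := by
  rw [hα.unique (hasDerivAt_regularMobius_line hq α),
    hβ.unique (hasDerivAt_regularMobius_line hq β)]
  simp only [Quaternion.star_smul, star_neg, star_mul, star_inv₀, star_sub, star_one, star_pow,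
    neg_smul, neg_mul_neg, smul_mul_smul_comm, ← sq, inv_pow, mul_assoc]
end

section
/- For every q ∈ ℍ with ‖q‖ < 1 and all α, β ∈ ℍ, the slice Hermitian metric H_q(α, β) = (1 − ‖q‖²)⁻² · (1 − q²)⁻¹ · (α − qαq) · conj(β − qβq) · (1 − conj(q)²)⁻¹ satisfies the Hermitian symmetry H_q(α, β) = conj(H_q(β, α)). -/
/-- The slice Hermitian metric of the quaternionic unit ball. -/
noncomputable def sliceHermitian (q α β : Quaternion ℝ) : Quaternion ℝ :=
  ((1 - ‖q‖ ^ 2) ^ 2)⁻¹ •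
    ((1 - q ^ 2)⁻¹ * (α - q * α * q) * star (β - q * β * q) * (1 - star q ^ 2)⁻¹)

/-- the slice Hermitian metric is Hermitian symmetric:
`H_q(α, β) = conj(H_q(β, α))`. -/
theorem sliceHermitian_symm (q : Quaternion ℝ) (hq : ‖q‖ < 1) (α β : Quaternion ℝ) :
    sliceHermitian q α β = star (sliceHermitian q β α) := by
  unfold sliceHermitian
  rw [Quaternion.star_smul]
  simp only [star_mul, star_inv₀, star_sub, star_one, star_pow, star_star, mul_assoc]
end

section
/- Let q ∈ ℍ with ‖q‖ < 1 and α ∈ ℍ. Then H_q(α, α) = (1 − ‖q‖²)⁻² · (1 − q²)⁻¹ · (α − qαq) · conj(α − qαq) · (1 − conj(q)²)⁻¹ equals the nonnegative real number ‖α − qαq‖² / (‖1 − q²‖² · (1 − ‖q‖²)²) (viewed inside ℍ), and H_q(α, α) = 0 if and only if α = 0. -/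
lemma quat_mul_star_self (a : Quaternion ℝ) : a * star a = ((‖a‖ ^ 2 : ℝ) : Quaternion ℝ) := by
  rw [Quaternion.self_mul_star, Quaternion.normSq_eq_norm_mul_self, sq]

lemma aux_key (q : Quaternion ℝ) (hq : ‖q‖ < 1) (α : Quaternion ℝ) :
    sliceHermitian q α α =
      ((‖α - q * α * q‖ ^ 2 / (‖1 - q ^ 2‖ ^ 2 * (1 - ‖q‖ ^ 2) ^ 2) : ℝ) : Quaternion ℝ) := by
  have hq1 : (1 : Quaternion ℝ) - q ^ 2 ≠ 0 := by
    intro h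
    have h2 : q ^ 2 = 1 := (sub_eq_zero.mp h).symm
    have : ‖q‖ ^ 2 = 1 := by
      have := congrArg norm h2
      simpa [norm_pow] using this
    nlinarith [norm_nonneg q]
  set y := α - q * α * q with hy
  have hstar : (1 : Quaternion ℝ) - star q ^ 2 = star (1 - q ^ 2) := by
    simp [star_sub, star_pow]
  have key : (1 - q ^ 2)⁻¹ * y * star y * (1 - star q ^ 2)⁻¹
      = ((‖y‖ ^ 2 / ‖1 - q ^ 2‖ ^ 2 : ℝ) : Quaternion ℝ) := by
    rw [hstar, ← star_inv₀]
    have hys : y * star y = ((‖y‖ ^ 2 : ℝ) : Quaternion ℝ) := quat_mul_star_self y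
    calc (1 - q ^ 2)⁻¹ * y * star y * star (1 - q ^ 2)⁻¹
        = (1 - q ^ 2)⁻¹ * (y * star y) * star (1 - q ^ 2)⁻¹ := by
          rw [mul_assoc (1 - q ^ 2)⁻¹ y (star y)]
      _ = ((‖y‖ ^ 2 : ℝ) : Quaternion ℝ) * ((1 - q ^ 2)⁻¹ * star (1 - q ^ 2)⁻¹) := by
          rw [hys, ← Quaternion.coe_commutes, mul_assoc]
      _ = ((‖y‖ ^ 2 : ℝ) : Quaternion ℝ) * ((‖(1 - q ^ 2)⁻¹‖ ^ 2 : ℝ) : Quaternion ℝ) := by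
          rw [quat_mul_star_self]
      _ = ((‖y‖ ^ 2 / ‖1 - q ^ 2‖ ^ 2 : ℝ) : Quaternion ℝ) := by
          rw [← Quaternion.coe_mul, norm_inv]
          congr 1
          field_simp
  rw [sliceHermitian, key]
  rw [← Quaternion.coe_mul_eq_smul, ← Quaternion.coe_mul]
  congr 1
  field_simp

/-- `H_q(α, α)` is the nonnegative real number
`‖α − qαq‖² / (‖1 − q²‖² (1 − ‖q‖²)²)` viewed inside `ℍ`, and it vanishes iff `α = 0`. -/
theorem sliceHermitian_posdef (q : Quaternion ℝ) (hq : ‖q‖ < 1) (α : Quaternion ℝ) :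
    sliceHermitian q α α =
      ((‖α - q * α * q‖ ^ 2 / (‖1 - q ^ 2‖ ^ 2 * (1 - ‖q‖ ^ 2) ^ 2) : ℝ) : Quaternion ℝ) ∧
    (sliceHermitian q α α = 0 ↔ α = 0) := by
  have hkey := aux_key q hq α
  refine ⟨hkey, ?_⟩
  have hq1 : (1 : Quaternion ℝ) - q ^ 2 ≠ 0 := by
    intro h
    have h2 : q ^ 2 = 1 := (sub_eq_zero.mp h).symm
    have : ‖q‖ ^ 2 = 1 := by
      have := congrArg norm h2
      simpa [norm_pow] using this
    nlinarith [norm_nonneg q]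
  have hden : ‖1 - q ^ 2‖ ^ 2 * (1 - ‖q‖ ^ 2) ^ 2 ≠ 0 := by
    have h1 : ‖(1 : Quaternion ℝ) - q ^ 2‖ ≠ 0 := norm_ne_zero_iff.mpr hq1
    have h2 : 1 - ‖q‖ ^ 2 ≠ 0 := by nlinarith [norm_nonneg q]
    positivity
  rw [hkey]
  constructor
  · intro h
    have h0 : (‖α - q * α * q‖ ^ 2 / (‖1 - q ^ 2‖ ^ 2 * (1 - ‖q‖ ^ 2) ^ 2) : ℝ) = 0 := by
      exact Quaternion.coe_injective (by simpa using h)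
    have hy0 : ‖α - q * α * q‖ = 0 := by
      have := (div_eq_zero_iff.mp h0).resolve_right hden
      exact pow_eq_zero_iff (n := 2) (by norm_num) |>.mp this
    have hy : α = q * α * q := by
      exact sub_eq_zero.mp (norm_eq_zero.mp hy0)
    by_contra hα
    have hn : ‖α‖ = ‖q‖ * ‖α‖ * ‖q‖ := by
      conv_lhs => rw [hy]
      rw [norm_mul, norm_mul]
    have hα' : 0 < ‖α‖ := norm_pos_iff.mpr hα
    have hq2 : ‖q‖ * ‖q‖ < 1 := by nlinarith [norm_nonneg q]
    nlinarith
  · intro h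
    subst h
    simp
end

section
/- For every q ∈ ℍ with ‖q‖ < 1 and all α, β ∈ ℍ, Re((1 − q²)⁻¹ · (α − qαq) · conj(β − qβq) · (1 − conj(q)²)⁻¹) = Re((α − qαq) · conj(β − qβq)) / ‖1 − q²‖². Consequently the slice Riemannian metric G_q(α, β) = Re(H_q(α, β)) equals Re((α − qαq) · conj(β − qβq)) / (‖1 − q²‖² · (1 − ‖q‖²)²). -/
lemma re_mul_comm (a b : Quaternion ℝ) : (a * b).re = (b * a).re := by
  simp only [Quaternion.re_mul]; ring

/-- the real part of
`(1 − q²)⁻¹ (α − qαq) conj(β − qβq) (1 − conj(q)²)⁻¹` equals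
`Re((α − qαq) conj(β − qβq)) / ‖1 − q²‖²`; consequently the slice Riemannian metric
`G_q(α, β) = Re(H_q(α, β))` equals `Re((α − qαq) conj(β − qβq)) / (‖1 − q²‖² (1 − ‖q‖²)²)`. -/
theorem sliceRiemannian_formula (q : Quaternion ℝ) (hq : ‖q‖ < 1) (α β : Quaternion ℝ) :
    ((1 - q ^ 2)⁻¹ * (α - q * α * q) * star (β - q * β * q) * (1 - star q ^ 2)⁻¹).re =
      ((α - q * α * q) * star (β - q * β * q)).re / ‖1 - q ^ 2‖ ^ 2 ∧
    (sliceHermitian q α β).re =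
      ((α - q * α * q) * star (β - q * β * q)).re / (‖1 - q ^ 2‖ ^ 2 * (1 - ‖q‖ ^ 2) ^ 2) := by
  set a : Quaternion ℝ := 1 - q ^ 2 with ha
  have h1 : (1 - star q ^ 2 : Quaternion ℝ)⁻¹ = star a⁻¹ := by
    have hs : (1 - star q ^ 2 : Quaternion ℝ) = star a := by
      simp [ha, star_pow]
    rw [hs, star_inv₀]
  have key : ((1 - q ^ 2)⁻¹ * (α - q * α * q) * star (β - q * β * q) *
      (1 - star q ^ 2)⁻¹).re =
      ((α - q * α * q) * star (β - q * β * q)).re / ‖a‖ ^ 2 := by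
    rw [h1, ← ha]
    have e1 : (a⁻¹ * (α - q * α * q) * star (β - q * β * q) * star a⁻¹).re
        = (star a⁻¹ * a⁻¹ * ((α - q * α * q) * star (β - q * β * q))).re := by
      rw [re_mul_comm]; congr 1; noncomm_ring
    rw [e1, Quaternion.star_mul_self, Quaternion.coe_mul_eq_smul, Quaternion.re_smul,
      Quaternion.normSq_eq_norm_mul_self, norm_inv, smul_eq_mul, div_eq_mul_inv, mul_comm]
    ring
  refine ⟨key, ?_⟩
  rw [sliceHermitian, Quaternion.re_smul, ← ha, key, smul_eq_mul]
  field_simp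
end

section
/- Let I, J ∈ ℍ satisfy I² = −1, J² = −1 and IJ = −JI. Let q = x + yI with x, y ∈ ℝ, and let α = α₁ + α₂·J and β = β₁ + β₂·J where α₁, α₂, β₁, β₂ lie in the real span of {1, I}. Then Re((α − qαq) · conj(β − qβq)) = ‖1 − q²‖² · Re(α · conj(β)) − 4y² · Re(α₂ · conj(β₂)). -/
/-!
Conjugation by `J` acts on the slice `ℂ_I = ℝ[I]` as quaternion conjugation, `J z = conj(z) J`.
Hence `q (α₂ J) q = α₂ q conj(q) J = |q|² α₂ J`, while `q α₁ q = q² α₁`, so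
`α - qαq = α₁ (1 - q²) + α₂ (1 - |q|²) J`. Since `ℍ = ℂ_I ⊕ ℂ_I J` is orthogonal, the real part
of `(a₁ + a₂ J) conj(b₁ + b₂ J)` is `Re(a₁ conj b₁) + Re(a₂ conj b₂)`, and the theorem reduces to
the real identity `|1 - q²|² = (1 - |q|²)² + 4y²`.
-/

namespace Algebra

variable {R A : Type*} [CommSemiring R] [Semiring A] [Algebra R A] {x a b : A}

theorem commute_of_mem_adjoin_singleton (ha : a ∈ adjoin R {x}) (hb : b ∈ adjoin R {x}) :
    Commute a b :=
  commute_of_mem_adjoin_singleton_of_commute hb (commute_of_mem_adjoin_self ha).symm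

theorem mem_adjoin_singleton_of_mem_span_one_pair (ha : a ∈ Submodule.span R {1, x}) :
    a ∈ adjoin R {x} :=
  adjoin_insert_one (R := R) {x} ▸ span_le_adjoin R {1, x} ha

end Algebra

namespace Quaternion

section OrderedRing

variable {R : Type*} [CommRing R] [LinearOrder R] [IsStrictOrderedRing R] {a : ℍ[R]}

theorem normSq_eq_one_of_sq_eq_neg_one (h : a ^ 2 = -1) : normSq a = 1 :=
  (pow_eq_one_iff_of_nonneg normSq_nonneg two_ne_zero).mp <| by
    rw [← map_pow, h, normSq_neg, map_one]

theorem re_eq_zero_of_sq_eq_neg_one (h : a ^ 2 = -1) : a.re = 0 := by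
  rw [← sq_eq_neg_normSq, normSq_eq_one_of_sq_eq_neg_one h, h, coe_one]

end OrderedRing

theorem re_mul_mul_star_mul {R : Type*} [CommRing R] (a b w : ℍ[R]) :
    (a * w * star (b * w)).re = normSq w * (a * star b).re := by
  rw [star_mul, mul_assoc, ← mul_assoc w, self_mul_star, ← mul_assoc, ← coe_commutes,
    mul_assoc, coe_mul_eq_smul, re_smul, smul_eq_mul]

section Slice

variable {I J : ℍ[ℝ]}

theorem normSq_coe_add_smul (hI : I ^ 2 = -1) (a b : ℝ) :
    normSq ((a : ℍ[ℝ]) + b • I) = a ^ 2 + b ^ 2 := by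
  have hre : I.re = 0 := re_eq_zero_of_sq_eq_neg_one hI
  rw [normSq_add, normSq_coe, normSq_smul, normSq_eq_one_of_sq_eq_neg_one hI, star_smul,
    star_eq_neg.mpr hre, coe_mul_eq_smul]
  simp [hre]

theorem normSq_one_sub_sq_coe_add_smul (hI : I ^ 2 = -1) (x y : ℝ) :
    normSq (1 - ((x : ℍ[ℝ]) + y • I) ^ 2) =
      (1 - normSq ((x : ℍ[ℝ]) + y • I)) ^ 2 + 4 * y ^ 2 := by
  have hII : I * I = -1 := by rw [← sq, hI]
  have hsq : 1 - ((x : ℍ[ℝ]) + y • I) ^ 2 =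
      ((1 - x ^ 2 + y ^ 2 : ℝ) : ℍ[ℝ]) + (-2 * x * y) • I := by
    simp only [sq, add_mul, mul_add, coe_mul_eq_smul, mul_smul_comm, smul_mul_assoc, hII]
    ext <;> simp <;> ring
  rw [hsq, normSq_coe_add_smul hI, normSq_coe_add_smul hI]
  ring

theorem mul_eq_star_mul_of_mem_adjoin (hI : I ^ 2 = -1) (hIJ : I * J = -(J * I)) {z : ℍ[ℝ]}
    (hz : z ∈ Algebra.adjoin ℝ {I}) : J * z = star z * J := by
  induction hz using Algebra.adjoin_induction with
  | mem x hx =>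
    rw [Set.mem_singleton_iff.mp hx, star_eq_neg.mpr (re_eq_zero_of_sq_eq_neg_one hI), neg_mul,
      hIJ, neg_neg]
  | algebraMap r => simpa using (coe_commutes r J).symm
  | add x y _ _ hx hy => rw [mul_add, hx, hy, star_add, add_mul]
  | mul x y hx' hy' hx hy =>
    rw [← mul_assoc, hx, mul_assoc, hy, ← mul_assoc, ← star_mul,
      (Algebra.commute_of_mem_adjoin_singleton hx' hy').eq]

theorem mul_star_eq_mul_of_mem_adjoin (hI : I ^ 2 = -1) (hJ : J ^ 2 = -1)
    (hIJ : I * J = -(J * I)) {z : ℍ[ℝ]} (hz : z ∈ Algebra.adjoin ℝ {I}) :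
    J * star z = z * J := by
  have hJJ : J * J = -1 := by rw [← sq, hJ]
  calc J * star z = -(J * (star z * J) * J) := by
        rw [mul_assoc, mul_assoc, hJJ, mul_neg_one, mul_neg, neg_neg]
    _ = -(J * (J * z) * J) := by rw [mul_eq_star_mul_of_mem_adjoin hI hIJ hz]
    _ = z * J := by rw [← mul_assoc, hJJ, neg_one_mul, neg_mul, neg_neg]

theorem re_mul_eq_zero_of_mem_adjoin (hI : I ^ 2 = -1) (hJ : J ^ 2 = -1)
    (hIJ : I * J = -(J * I)) {z : ℍ[ℝ]} (hz : z ∈ Algebra.adjoin ℝ {I}) : (z * J).re = 0 := by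
  rw [← star_eq_neg, star_mul, star_eq_neg.mpr (re_eq_zero_of_sq_eq_neg_one hJ), neg_mul,
    mul_star_eq_mul_of_mem_adjoin hI hJ hIJ hz]

theorem re_add_mul_mul_star_add_mul (hI : I ^ 2 = -1) (hJ : J ^ 2 = -1)
    (hIJ : I * J = -(J * I)) {a₁ a₂ b₁ b₂ : ℍ[ℝ]} (ha₁ : a₁ ∈ Algebra.adjoin ℝ {I})
    (ha₂ : a₂ ∈ Algebra.adjoin ℝ {I}) (hb₁ : b₁ ∈ Algebra.adjoin ℝ {I})
    (hb₂ : b₂ ∈ Algebra.adjoin ℝ {I}) :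
    ((a₁ + a₂ * J) * star (b₁ + b₂ * J)).re = (a₁ * star b₁).re + (a₂ * star b₂).re := by
  have hJJ : J * J = -1 := by rw [← sq, hJ]
  have hstarJ : star J = -J := star_eq_neg.mpr (re_eq_zero_of_sq_eq_neg_one hJ)
  have hexpand : (a₁ + a₂ * J) * star (b₁ + b₂ * J) =
      a₁ * star b₁ + a₂ * star b₂ + (a₂ * b₁ - a₁ * b₂) * J :=
    calc (a₁ + a₂ * J) * star (b₁ + b₂ * J)
        = a₁ * star b₁ + a₂ * (J * star b₁) - a₁ * (b₂ * J) - a₂ * (J * b₂) * J := by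
          rw [star_add, star_mul, hstarJ, neg_mul, mul_star_eq_mul_of_mem_adjoin hI hJ hIJ hb₂]
          noncomm_ring
      _ = a₁ * star b₁ + a₂ * star b₂ + (a₂ * b₁ - a₁ * b₂) * J := by
          rw [mul_star_eq_mul_of_mem_adjoin hI hJ hIJ hb₁, mul_eq_star_mul_of_mem_adjoin hI hIJ hb₂,
            mul_assoc a₂, mul_assoc (star b₂) J J, hJJ]
          noncomm_ring
  have hmem : a₂ * b₁ - a₁ * b₂ ∈ Algebra.adjoin ℝ {I} :=
    sub_mem (mul_mem ha₂ hb₁) (mul_mem ha₁ hb₂)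
  rw [hexpand, re_add, re_mul_eq_zero_of_mem_adjoin hI hJ hIJ hmem, add_zero, re_add]

theorem add_mul_sub_mul_add_mul_mul (hI : I ^ 2 = -1) (hIJ : I * J = -(J * I)) {q a₁ a₂ : ℍ[ℝ]}
    (hq : q ∈ Algebra.adjoin ℝ {I}) (ha₁ : a₁ ∈ Algebra.adjoin ℝ {I})
    (ha₂ : a₂ ∈ Algebra.adjoin ℝ {I}) :
    a₁ + a₂ * J - q * (a₁ + a₂ * J) * q =
      a₁ * (1 - q ^ 2) + a₂ * ((1 - normSq q : ℝ) : ℍ[ℝ]) * J :=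
  calc a₁ + a₂ * J - q * (a₁ + a₂ * J) * q
      = a₁ - q * a₁ * q + (a₂ * J - q * a₂ * (J * q)) := by noncomm_ring
    _ = a₁ - a₁ * (q * q) + (a₂ * J - a₂ * (q * star q) * J) := by
        rw [mul_eq_star_mul_of_mem_adjoin hI hIJ hq,
          (Algebra.commute_of_mem_adjoin_singleton hq ha₁).eq,
          (Algebra.commute_of_mem_adjoin_singleton hq ha₂).eq]
        noncomm_ring
    _ = a₁ * (1 - q ^ 2) + a₂ * ((1 - normSq q : ℝ) : ℍ[ℝ]) * J := by
        rw [self_mul_star, coe_sub, coe_one]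
        noncomm_ring

end Slice

end Quaternion

open Quaternion

/-- the key slice computation: for `q = x + yI` in the slice `ℂ_I` and
`α = α₁ + α₂J`, `β = β₁ + β₂J` with `α₁, α₂, β₁, β₂ ∈ ℂ_I`,
`Re((α − qαq) conj(β − qβq)) = ‖1 − q²‖² Re(α conj β) − 4y² Re(α₂ conj β₂)`. -/
theorem slice_decomposition_re (I J : Quaternion ℝ)
    (hI : I ^ 2 = -1) (hJ : J ^ 2 = -1) (hIJ : I * J = -(J * I))
    (x y : ℝ) (α₁ α₂ β₁ β₂ : Quaternion ℝ)
    (hα₁ : α₁ ∈ Submodule.span ℝ ({1, I} : Set (Quaternion ℝ)))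
    (hα₂ : α₂ ∈ Submodule.span ℝ ({1, I} : Set (Quaternion ℝ)))
    (hβ₁ : β₁ ∈ Submodule.span ℝ ({1, I} : Set (Quaternion ℝ)))
    (hβ₂ : β₂ ∈ Submodule.span ℝ ({1, I} : Set (Quaternion ℝ)))
    (q α β : Quaternion ℝ)
    (hq : q = (x : Quaternion ℝ) + y • I)
    (hα : α = α₁ + α₂ * J) (hβ : β = β₁ + β₂ * J) :
    ((α - q * α * q) * star (β - q * β * q)).re =
      ‖1 - q ^ 2‖ ^ 2 * (α * star β).re - 4 * y ^ 2 * (α₂ * star β₂).re := by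
  replace hα₁ := Algebra.mem_adjoin_singleton_of_mem_span_one_pair hα₁
  replace hα₂ := Algebra.mem_adjoin_singleton_of_mem_span_one_pair hα₂
  replace hβ₁ := Algebra.mem_adjoin_singleton_of_mem_span_one_pair hβ₁
  replace hβ₂ := Algebra.mem_adjoin_singleton_of_mem_span_one_pair hβ₂
  have hqI : q ∈ Algebra.adjoin ℝ {I} := hq ▸ add_mem (Subalgebra.algebraMap_mem _ x)
    (Subalgebra.smul_mem _ (Algebra.self_mem_adjoin_singleton ℝ I) y)
  have hw : 1 - q ^ 2 ∈ Algebra.adjoin ℝ {I} := sub_mem (one_mem _) (pow_mem hqI 2)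
  have hc : ((1 - normSq q : ℝ) : ℍ[ℝ]) ∈ Algebra.adjoin ℝ {I} := Subalgebra.algebraMap_mem _ _
  have hnorm : normSq (1 - q ^ 2) = (1 - normSq q) ^ 2 + 4 * y ^ 2 :=
    hq ▸ normSq_one_sub_sq_coe_add_smul hI x y
  subst hα hβ
  rw [add_mul_sub_mul_add_mul_mul hI hIJ hqI hα₁ hα₂,
    add_mul_sub_mul_add_mul_mul hI hIJ hqI hβ₁ hβ₂,
    re_add_mul_mul_star_add_mul hI hJ hIJ hα₁ hα₂ hβ₁ hβ₂,
    re_add_mul_mul_star_add_mul hI hJ hIJ (mul_mem hα₁ hw) (mul_mem hα₂ hc) (mul_mem hβ₁ hw)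
      (mul_mem hβ₂ hc),
    re_mul_mul_star_mul, re_mul_mul_star_mul, normSq_coe, sq ‖1 - q ^ 2‖,
    ← normSq_eq_norm_mul_self, hnorm]
  ring
end

section
/- For every imaginary unit I ∈ ℍ (I² = −1), every q in the slice disk 𝔻_I = {x + yI : x, y ∈ ℝ, x² + y² < 1}, and all α, β in the real span of {1, I}, the slice Riemannian metric satisfies G_q(α, β) = Re(α · conj(β)) / (1 − ‖q‖²)². -/
open Quaternion

/-- The slice Riemannian metric of the quaternionic unit ball. -/
noncomputable def sliceRiemannian (q α β : Quaternion ℝ) : ℝ :=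
  ((α - q * α * q) * star (β - q * β * q)).re / (‖1 - q ^ 2‖ ^ 2 * (1 - ‖q‖ ^ 2) ^ 2)

lemma re_I_eq_zero (I : Quaternion ℝ) (hI : I ^ 2 = -1) : I.re = 0 := by
  have hne : I ≠ 0 := by
    intro h; rw [h] at hI; simp at hI
  have hn : ‖I‖ = 1 := by
    have h1 : ‖I‖ ^ 2 = 1 := by
      have := congrArg norm hI
      simpa [norm_pow] using this
    nlinarith [norm_nonneg I]
  have hns : (Quaternion.normSq I : ℝ) = 1 := by
    rw [Quaternion.normSq_eq_norm_mul_self, hn]; norm_num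
  have hstar : I * star I = 1 := by
    rw [Quaternion.self_mul_star, hns]; norm_num
  rw [Quaternion.star_eq_two_re_sub] at hstar
  have hII : I * I = -1 := by rw [← sq]; exact hI
  have h2 : I * ((2 * I.re : ℝ) : Quaternion ℝ) = 0 := by
    have : I * ((2 * I.re : ℝ) : Quaternion ℝ) - I * I = 1 := by
      rw [← mul_sub]; exact hstar
    rw [hII] at this
    have h3 := sub_eq_iff_eq_add.mp this
    rw [h3]; norm_num
  rcases mul_eq_zero.mp h2 with h | h
  · exact absurd h hne
  · have : (2 * I.re : ℝ) = 0 := by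
      exact Quaternion.coe_injective (by simpa using h)
    linarith

lemma comm_aux (I : Quaternion ℝ) (hII : I * I = -1) (a b c d : ℝ) :
    (a • (1:Quaternion ℝ) + b • I) * (c • (1:Quaternion ℝ) + d • I)
      = (c • (1:Quaternion ℝ) + d • I) * (a • (1:Quaternion ℝ) + b • I) := by
  simp only [add_mul, mul_add, smul_mul_smul_comm, one_mul, mul_one, hII]
  match_scalars <;> ring

/-- on a slice disk `𝔻_I`, for tangent vectors in `ℂ_I`, the slice Riemannian
metric restricts to the hyperbolic metric: `G_q(α, β) = Re(α conj β)/(1 − ‖q‖²)²`. -/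
theorem sliceRiemannian_on_slice (I : Quaternion ℝ) (hI : I ^ 2 = -1)
    (q : Quaternion ℝ) (x y : ℝ) (hq : q = (x : Quaternion ℝ) + y • I)
    (hxy : x ^ 2 + y ^ 2 < 1)
    (α β : Quaternion ℝ)
    (hα : α ∈ Submodule.span ℝ ({1, I} : Set (Quaternion ℝ)))
    (hβ : β ∈ Submodule.span ℝ ({1, I} : Set (Quaternion ℝ))) :
    sliceRiemannian q α β = (α * star β).re / (1 - ‖q‖ ^ 2) ^ 2 := by
  have hII : I * I = -1 := by rw [← sq]; exact hI
  have hre : I.re = 0 := re_I_eq_zero I hI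
  have hstarI : star I = -I := by
    rw [Quaternion.star_eq_two_re_sub, hre]; simp
  obtain ⟨a, b, ha⟩ := Submodule.mem_span_pair.mp hα
  obtain ⟨c, d, hb⟩ := Submodule.mem_span_pair.mp hβ
  have hcoe : ∀ r : ℝ, (r : Quaternion ℝ) = r • (1 : Quaternion ℝ) := fun r => by
    rw [← Quaternion.coe_mul_eq_smul, mul_one]
  have hqform : q = x • (1 : Quaternion ℝ) + y • I := by rw [hq, hcoe]
  have hqa : q * α = α * q := by
    rw [hqform, ← ha]; exact comm_aux I hII x y a b
  have hqb : q * β = β * q := by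
    rw [hqform, ← hb]; exact comm_aux I hII x y c d
  have hstarq : star q = (x : Quaternion ℝ) - y • I := by
    rw [hq]; simp [hstarI, sub_eq_add_neg]
  have hqstarq : q * star q = ((x ^ 2 + y ^ 2 : ℝ) : Quaternion ℝ) := by
    rw [hstarq, hq, hcoe x, hcoe (x ^ 2 + y ^ 2)]
    simp only [mul_sub, add_mul, smul_mul_smul_comm, one_mul, mul_one,
      smul_mul_assoc, mul_smul_comm, hII]
    match_scalars <;> ring
  have hnormq : ‖q‖ ^ 2 = x ^ 2 + y ^ 2 := by
    have h1 : (Quaternion.normSq q : ℝ) = x ^ 2 + y ^ 2 := by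
      have h2 := hqstarq
      rw [Quaternion.self_mul_star] at h2
      exact Quaternion.coe_injective h2
    rw [sq, ← Quaternion.normSq_eq_norm_mul_self, h1]
  have hq2 : (1 : Quaternion ℝ) - q ^ 2 ≠ 0 := by
    intro h
    rw [sub_eq_zero] at h
    have h1 : ‖q ^ 2‖ = 1 := by rw [← h, norm_one]
    rw [norm_pow, hnormq] at h1
    linarith
  have hnq2 : ‖1 - q ^ 2‖ ^ 2 ≠ 0 := pow_ne_zero _ (norm_ne_zero_iff.mpr hq2)
  have hA : α - q * α * q = α * (1 - q ^ 2) := by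
    rw [hqa, mul_sub, mul_one, sq, mul_assoc]
  have hB : β - q * β * q = β * (1 - q ^ 2) := by
    rw [hqb, mul_sub, mul_one, sq, mul_assoc]
  have hnum : (α - q * α * q) * star (β - q * β * q)
      = Quaternion.normSq (1 - q ^ 2) • (α * star β) := by
    rw [hA, hB, star_mul, mul_assoc, ← mul_assoc (1 - q ^ 2), Quaternion.self_mul_star,
      Quaternion.coe_mul_eq_smul, mul_smul_comm, ← smul_mul_assoc]
  rw [sliceRiemannian, hnum, Quaternion.re_smul, Quaternion.normSq_eq_norm_mul_self, ← sq,
    smul_eq_mul, mul_div_mul_left _ _ hnq2]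
end

section
/- For every quaternion q ∈ ℍ, ‖1 − q²‖² − 4·‖Im(q)‖² = (1 − ‖q‖²)². -/
/-!
Write `q = a + v` with `a` real and `v` imaginary, so that `v² = -‖v‖²` and
`q² = (a² - ‖v‖²) + 2a v`. With `X = 1 - a²` and `Y = ‖v‖²` this gives
`‖1 - q²‖² = (X + Y)² + 4a²Y`, hence `‖1 - q²‖² - 4Y = (X + Y)² - 4XY = (X - Y)²`,
and `X - Y = 1 - ‖q‖²`.
-/

namespace Quaternion

section CommRing

variable {R : Type*} [CommRing R]

theorem normSq_eq_re_sq_add_normSq_im (q : ℍ[R]) : normSq q = q.re ^ 2 + normSq q.im := by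
  simp only [normSq_def', re_im, imI_im, imJ_im, imK_im]
  ring

theorem normSq_one_sub_sq (q : ℍ[R]) :
    normSq (1 - q ^ 2) = (1 - q.re ^ 2 + normSq q.im) ^ 2 + 4 * q.re ^ 2 * normSq q.im := by
  simp only [normSq_def', sq, re_sub, imI_sub, imJ_sub, imK_sub, re_mul, imI_mul, imJ_mul,
    imK_mul, re_one, imI_one, imJ_one, imK_one, re_im, imI_im, imJ_im, imK_im]
  ring

theorem normSq_one_sub_sq_sub_four_mul_normSq_im (q : ℍ[R]) :
    normSq (1 - q ^ 2) - 4 * normSq q.im = (1 - normSq q) ^ 2 := by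
  rw [normSq_one_sub_sq, normSq_eq_re_sq_add_normSq_im q]
  ring

end CommRing

theorem sq_norm (q : ℍ[ℝ]) : ‖q‖ ^ 2 = normSq q := by
  rw [sq, normSq_eq_norm_mul_self]

end Quaternion

/-- for every quaternion `q`, `‖1 − q²‖² − 4‖Im(q)‖² = (1 − ‖q‖²)²`. -/
theorem norm_one_sub_sq_identity (q : Quaternion ℝ) :
    ‖1 - q ^ 2‖ ^ 2 - 4 * ‖q.im‖ ^ 2 = (1 - ‖q‖ ^ 2) ^ 2 := by
  simpa only [Quaternion.sq_norm] using Quaternion.normSq_one_sub_sq_sub_four_mul_normSq_im q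
end

section
/- Let u ∈ ℍ be a unit quaternion (‖u‖ = 1). Then for every q ∈ ℍ with ‖q‖ < 1 and all α, β ∈ ℍ, the slice Riemannian metric satisfies G_q(α, β) = G_{uqu⁻¹}(uαu⁻¹, uβu⁻¹). -/
/-- Riemannian representation formula: the slice Riemannian metric is invariant
under conjugation by any unit quaternion: `G_q(α, β) = G_{uqu⁻¹}(uαu⁻¹, uβu⁻¹)`. -/
theorem sliceRiemannian_conj_invariant (u : Quaternion ℝ) (hu : ‖u‖ = 1)
    (q : Quaternion ℝ) (hq : ‖q‖ < 1) (α β : Quaternion ℝ) :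
    sliceRiemannian q α β =
      sliceRiemannian (u * q * u⁻¹) (u * α * u⁻¹) (u * β * u⁻¹) := by
  have hu0 : u ≠ 0 := by
    intro h; rw [h, norm_zero] at hu; norm_num at hu
  have hns : Quaternion.normSq u = 1 := by
    rw [Quaternion.normSq_eq_norm_mul_self, hu]; norm_num
  have huv : u * star u = 1 := by
    rw [Quaternion.self_mul_star, hns]; simp
  have hvu : star u * u = 1 := by
    rw [Quaternion.star_mul_self, hns]; simp
  have hinv : u⁻¹ = star u := inv_eq_of_mul_eq_one_right huv
  set v := star u with hv
  have hcancel : ∀ x : Quaternion ℝ, v * (u * x) = x := fun x => by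
    rw [← mul_assoc, hvu, one_mul]
  have hre : ∀ a b : Quaternion ℝ, (a * b).re = (b * a).re := fun a b => by
    simp [Quaternion.re_mul]; ring
  have hreconj : ∀ z : Quaternion ℝ, (u * z * v).re = z.re := fun z => by
    rw [hre, hcancel]
  have hnorm : ∀ a : Quaternion ℝ, ‖u * a * v‖ = ‖a‖ := fun a => by
    rw [norm_mul, norm_mul, hu, hv, norm_star, hu]; ring
  rw [hinv]
  unfold sliceRiemannian
  have hX : u * α * v - u * q * v * (u * α * v) * (u * q * v)
      = u * (α - q * α * q) * v := by
    simp only [mul_sub, sub_mul, mul_assoc, hcancel]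
  have hY : u * β * v - u * q * v * (u * β * v) * (u * q * v)
      = u * (β - q * β * q) * v := by
    simp only [mul_sub, sub_mul, mul_assoc, hcancel]
  have hQ : 1 - (u * q * v) ^ 2 = u * (1 - q ^ 2) * v := by
    have : u * (1 : Quaternion ℝ) * v = 1 := by rw [mul_one, huv]
    simp only [pow_two, mul_sub, sub_mul, mul_assoc, hcancel, mul_one] at this ⊢
    rw [← this]
  rw [hX, hY, hQ]
  congr 1
  · have hstar : star (u * (β - q * β * q) * v) = u * star (β - q * β * q) * v := by
      simp [hv, star_mul, mul_assoc]
    rw [hstar]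
    set X := α - q * α * q
    set Y := star (β - q * β * q)
    have : u * X * v * (u * Y * v) = u * (X * Y) * v := by
      simp only [mul_assoc, hcancel]
    rw [this, hreconj]
  · rw [hnorm, hnorm]
end

section
/- Let q ∈ ℍ with ‖q‖ < 1 and α ∈ ℍ. If the slice 2-form satisfies Ω_q(α, β) = 0 for every β ∈ ℍ, then α = 0. -/
/-- The slice 2-form (slice Kähler form) of the quaternionic unit ball. -/
noncomputable def sliceTwoForm (q α β : Quaternion ℝ) : Quaternion ℝ :=
  (sliceHermitian q α β).im

section NormedRing

variable {R : Type*} [NormedRing R] {q : R}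

theorem eq_zero_of_sub_mul_mul_eq_zero {a : R} (hq : ‖q‖ < 1) (h : a - q * a * q = 0) :
    a = 0 := by
  by_contra ha
  have hpos : 0 < ‖a‖ := norm_pos_iff.mpr ha
  have hle : ‖a‖ ≤ ‖q‖ * ‖a‖ * ‖q‖ :=
    (congrArg norm (sub_eq_zero.mp h)).trans_le (norm_mul₃_le ..)
  nlinarith [mul_pos (mul_pos hpos (sub_pos.mpr hq)) (by positivity : 0 < 1 + ‖q‖)]

theorem one_sub_sq_ne_zero [NormOneClass R] (hq : ‖q‖ < 1) : 1 - q ^ 2 ≠ 0 := by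
  rw [sub_ne_zero]
  intro h
  have hle := norm_pow_le' q two_pos
  rw [← h, norm_one] at hle
  nlinarith [norm_nonneg q]

end NormedRing

theorem Quaternion.eq_zero_of_forall_im_mul_star_eq_zero {x : Quaternion ℝ}
    (h : ∀ y, (x * star y).im = 0) : x = 0 := by
  let i : Quaternion ℝ := ⟨0, 1, 0, 0⟩
  have hI := h (i * x)
  rw [star_mul, ← mul_assoc, self_mul_star] at hI
  have := congrArg QuaternionAlgebra.imI hI
  exact (by simpa using this : x = 0 ∨ i.imI = 0).resolve_right one_ne_zero

noncomputable def sliceFactor (q : Quaternion ℝ) : Quaternion ℝ →ₗ[ℝ] Quaternion ℝ :=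
  LinearMap.mulLeft ℝ (1 - q ^ 2)⁻¹ ∘ₗ
    (LinearMap.id - LinearMap.mulLeft ℝ q ∘ₗ LinearMap.mulRight ℝ q)

theorem sliceFactor_apply (q β : Quaternion ℝ) :
    sliceFactor q β = (1 - q ^ 2)⁻¹ * (β - q * β * q) := by
  simp [sliceFactor, mul_assoc]

theorem sliceFactor_injective {q : Quaternion ℝ} (hq : ‖q‖ < 1) :
    Function.Injective (sliceFactor q) := by
  refine (injective_iff_map_eq_zero _).mpr fun β hβ => eq_zero_of_sub_mul_mul_eq_zero hq ?_
  rw [sliceFactor_apply] at hβ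
  exact (mul_eq_zero.mp hβ).resolve_left (inv_ne_zero (one_sub_sq_ne_zero hq))

theorem sliceHermitian_eq (q α β : Quaternion ℝ) :
    sliceHermitian q α β =
      ((1 - ‖q‖ ^ 2) ^ 2)⁻¹ • (sliceFactor q α * star (sliceFactor q β)) := by
  simp [sliceHermitian, sliceFactor_apply, star_mul, mul_assoc]

/-- non-degeneracy of the slice 2-form: if `Ω_q(α, β) = 0` for every `β`,
then `α = 0`. -/
theorem sliceTwoForm_nondegenerate (q : Quaternion ℝ) (hq : ‖q‖ < 1) (α : Quaternion ℝ)
    (h : ∀ β : Quaternion ℝ, sliceTwoForm q α β = 0) : α = 0 := by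
  have hc : ((1 - ‖q‖ ^ 2) ^ 2)⁻¹ ≠ (0 : ℝ) := by
    have : ‖q‖ ^ 2 < 1 := by nlinarith [norm_nonneg q]
    positivity
  have hinj := sliceFactor_injective hq
  refine (injective_iff_map_eq_zero _).mp hinj α
    (Quaternion.eq_zero_of_forall_im_mul_star_eq_zero fun y => ?_)
  obtain ⟨β, rfl⟩ := LinearMap.injective_iff_surjective.mp hinj y
  simpa [sliceTwoForm, sliceHermitian_eq, hc] using h β
end

section
/- Let u ∈ ℍ be a unit quaternion (‖u‖ = 1). Then for every q ∈ ℍ with ‖q‖ < 1 and all α, β ∈ ℍ, the slice Hermitian metric satisfies H_q(α, β) = u⁻¹ · H_{uqu⁻¹}(uαu⁻¹, uβu⁻¹) · u. -/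
open Quaternion

theorem Quaternion.mem_unitary_of_norm_eq_one {u : ℍ[ℝ]} (hu : ‖u‖ = 1) :
    u ∈ unitary ℍ[ℝ] := by
  have h : ((normSq u : ℝ) : ℍ[ℝ]) = 1 := by simp [normSq_eq_norm_mul_self, hu]
  exact Unitary.mem_iff.2 ⟨by rwa [star_mul_self], by rwa [self_mul_star]⟩

section StarAlgHom

variable {F : Type*} [FunLike F ℍ[ℝ] ℍ[ℝ]] [AlgHomClass F ℝ ℍ[ℝ] ℍ[ℝ]]
  [StarHomClass F ℍ[ℝ] ℍ[ℝ]] (f : F)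

theorem Quaternion.normSq_map_starAlgHom (q : ℍ[ℝ]) : normSq (f q) = normSq q := by
  apply coe_injective
  rw [← self_mul_star, ← self_mul_star, ← map_star, ← map_mul, self_mul_star]
  exact AlgHomClass.commutes f _

theorem Quaternion.norm_map_starAlgHom (q : ℍ[ℝ]) : ‖f q‖ = ‖q‖ := by
  simp only [norm_eq_sqrt_real_inner, inner_self, normSq_map_starAlgHom]

theorem sliceHermitian_map (q α β : ℍ[ℝ]) :
    sliceHermitian (f q) (f α) (f β) = f (sliceHermitian q α β) := by
  simp only [sliceHermitian, map_smul, map_mul, map_inv₀, map_sub, map_one, map_pow, map_star,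
    norm_map_starAlgHom]

end StarAlgHom

theorem sliceHermitian_conj_equivariant_general (u : Quaternion ℝ) (hu : ‖u‖ = 1)
    (q : Quaternion ℝ) (α β : Quaternion ℝ) :
    sliceHermitian q α β =
      u⁻¹ * sliceHermitian (u * q * u⁻¹) (u * α * u⁻¹) (u * β * u⁻¹) * u := by
  have hu' := mem_unitary_of_norm_eq_one hu
  set c := Unitary.conjStarAlgAut ℝ ℍ[ℝ] ⟨u, hu'⟩
  have hinv : u⁻¹ = star u := inv_eq_of_mul_eq_one_right (Unitary.mul_star_self_of_mem hu')
  have hc (x : ℍ[ℝ]) : u * x * u⁻¹ = c x := by rw [hinv]; rfl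
  rw [hc, hc, hc, sliceHermitian_map, hinv]
  exact (c.symm_apply_apply _).symm

/-- slice Hermitian representation formula: for every unit quaternion `u`,
`H_q(α, β) = u⁻¹ · H_{uqu⁻¹}(uαu⁻¹, uβu⁻¹) · u`. -/
theorem sliceHermitian_conj_equivariant (u : Quaternion ℝ) (hu : ‖u‖ = 1)
    (q : Quaternion ℝ) (hq : ‖q‖ < 1) (α β : Quaternion ℝ) :
    sliceHermitian q α β =
      u⁻¹ * sliceHermitian (u * q * u⁻¹) (u * α * u⁻¹) (u * β * u⁻¹) * u :=
  sliceHermitian_conj_equivariant_general u hu q α β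
end
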